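/- Let l : 𝐊 → 𝐋 be a morphism of polarized graphs and m : 𝐋 → 𝐆 a matching with 𝐆 = (𝐋 + 𝐋̄) +ₑ 𝐋̃ and every linking edge for m polarized. Then the polarized pushback (terminal polarized pullback complement) of (m, l) exists and is given by 𝐃 = (𝐊 + 𝐋̄) +ₑ 𝐊̃, where K̃ has one polarized edge (e, n_D, p_D) : n_D → p_D for each n_D ∈ D_N⁺, p_D ∈ D_N⁻ and each polarized linking edge e : l₁(n_D) → l₁(p_D) in L̃⋆, with l₁ = (l + id_{𝐋̄}) +ₑ l̃ and l̃(e, n_D, p_D) = e. -/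

import Mathlib

/-!
Maps out of a single node or a single edge of prescribed polarity (`PGraph.point`,
`PGraph.arrow`) detect the nodes and edges of a pullback. Hence, for a pullback complement
`(l₁', d')` of `(m, l)`, the map `d'` is injective and every node or edge of `D'` lying over `L`
comes from a unique one of `K`, with its polarity. The comparison `D' → D` sends these back to
`K`, fixes what lies over `L̄`, and sends an edge `e'` over a linking edge `e` to
`(e, δ (src e'), δ (tgt e'))`. This is an edge of `K̃` because its endpoints are polarized
correctly: an endpoint over `L̄` by the polarization of `L̃`, an endpoint over `K` because `e'` is
then a linking edge for `d'`, hence polarized. The same description forces every value of a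
comparison, which gives uniqueness. Finally `D` is itself a pullback since `d` is a matching
onto the part of `D` over `L`.
-/

universe u

structure BaseGraph : Type (u + 1) where
  N : Type u
  E : Type u
  src : E → N
  tgt : E → N

@[ext]
structure GraphHom (X Y : BaseGraph.{u}) where
  fN : X.N → Y.N
  fE : X.E → Y.E
  hsrc : ∀ e, Y.src (fE e) = fN (X.src e)
  htgt : ∀ e, Y.tgt (fE e) = fN (X.tgt e)

def GraphHom.id (X : BaseGraph.{u}) : GraphHom X X :=
  ⟨_root_.id, _root_.id, fun _ => rfl, fun _ => rfl⟩

/-- `g.comp f` is the composite `g ∘ f`. -/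
def GraphHom.comp {X Y Z : BaseGraph.{u}} (g : GraphHom Y Z) (f : GraphHom X Y) :
    GraphHom X Z :=
  ⟨g.fN ∘ f.fN, g.fE ∘ f.fE,
    fun e => by simp [Function.comp, g.hsrc, f.hsrc],
    fun e => by simp [Function.comp, g.htgt, f.htgt]⟩

/-- A polarization of a graph: distinguished node subsets `N⁺`, `N⁻` and a
distinguished edge subset `E⋆` such that every edge in `E⋆` has its source
in `N⁺` and its target in `N⁻`. -/
structure Polarization (X : BaseGraph.{u}) where
  Np : Set X.N
  Nm : Set X.N
  Es : Set X.E
  hs : ∀ e ∈ Es, X.src e ∈ Np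
  ht : ∀ e ∈ Es, X.tgt e ∈ Nm

/-- A polarized graph: a graph together with a polarization. -/
structure PGraph : Type (u + 1) where
  toGraph : BaseGraph.{u}
  pol : Polarization toGraph

/-- A morphism of polarized graphs: a graph morphism preserving the three
distinguished subsets. -/
structure PGraphHom (X Y : PGraph.{u}) where
  toHom : GraphHom X.toGraph Y.toGraph
  hNp : ∀ n ∈ X.pol.Np, toHom.fN n ∈ Y.pol.Np
  hNm : ∀ n ∈ X.pol.Nm, toHom.fN n ∈ Y.pol.Nm
  hEs : ∀ e ∈ X.pol.Es, toHom.fE e ∈ Y.pol.Es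

def PGraphHom.id (X : PGraph.{u}) : PGraphHom X X :=
  ⟨GraphHom.id X.toGraph, fun _ h => h, fun _ h => h, fun _ h => h⟩

/-- `g.comp f` is the composite `g ∘ f`. -/
def PGraphHom.comp {X Y Z : PGraph.{u}} (g : PGraphHom Y Z) (f : PGraphHom X Y) :
    PGraphHom X Z :=
  ⟨g.toHom.comp f.toHom,
    fun n h => g.hNp _ (f.hNp n h),
    fun n h => g.hNm _ (f.hNm n h),
    fun e h => g.hEs _ (f.hEs e h)⟩

section
variable (X Xbar : BaseGraph.{u}) (Xt : Type u) (xs xt : Xt → X.N ⊕ Xbar.N)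

/-- The graph `(X + Xbar) +ₑ Xt` built from decomposition data. -/
def sumGraph : BaseGraph.{u} where
  N := X.N ⊕ Xbar.N
  E := X.E ⊕ Xbar.E ⊕ Xt
  src := Sum.elim (Sum.inl ∘ X.src) (Sum.elim (Sum.inr ∘ Xbar.src) xs)
  tgt := Sum.elim (Sum.inl ∘ X.tgt) (Sum.elim (Sum.inr ∘ Xbar.tgt) xt)

/-- The canonical inclusion (a monomorphism) `X → (X + Xbar) +ₑ Xt`. -/
def sumIncl : GraphHom X (sumGraph X Xbar Xt xs xt) :=
  ⟨Sum.inl, Sum.inl, fun _ => rfl, fun _ => rfl⟩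

end

section
variable (K L Lbar : PGraph.{u}) (l : PGraphHom K L)
variable (Lt : Type u) (ls lt : Lt → L.toGraph.N ⊕ Lbar.toGraph.N)
variable (hls : ∀ e, Sum.elim (· ∈ L.pol.Np) (· ∈ Lbar.pol.Np) (ls e))
variable (hlt : ∀ e, Sum.elim (· ∈ L.pol.Nm) (· ∈ Lbar.pol.Nm) (lt e))

/-- The polarized graph `G = (L + Lbar) +ₑ Lt`, where every linking edge is
polarized (`Lt⋆ = Lt`). -/
def polG : PGraph.{u} where
  toGraph := sumGraph L.toGraph Lbar.toGraph Lt ls lt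
  pol :=
  { Np := fun n => Sum.elim (· ∈ L.pol.Np) (· ∈ Lbar.pol.Np) n
    Nm := fun n => Sum.elim (· ∈ L.pol.Nm) (· ∈ Lbar.pol.Nm) n
    Es := fun e =>
      Sum.elim (· ∈ L.pol.Es) (Sum.elim (· ∈ Lbar.pol.Es) (fun _ => True)) e
    hs := by
      rintro (e | e | e) he
      · exact L.pol.hs e he
      · exact Lbar.pol.hs e he
      · exact hls e
    ht := by
      rintro (e | e | e) he
      · exact L.pol.ht e he
      · exact Lbar.pol.ht e he
      · exact hlt e }

/-- The matching `m : L → G` (the canonical inclusion). -/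
def polm : PGraphHom L (polG L Lbar Lt ls lt hls hlt) where
  toHom := sumIncl L.toGraph Lbar.toGraph Lt ls lt
  hNp := fun _ h => h
  hNm := fun _ h => h
  hEs := fun _ h => h

/-- The linking edges of the polarized pushback: one (polarized) edge
`(e, n_D, p_D) : n_D → p_D` for each `n_D ∈ D⁺`, `p_D ∈ D⁻` and each
(polarized) linking edge `e : l₁ n_D → l₁ p_D` in `Lt`. -/
def polKt : Type u :=
  {x : ((K.toGraph.N ⊕ Lbar.toGraph.N) × (K.toGraph.N ⊕ Lbar.toGraph.N)) × Lt //
    Sum.elim (· ∈ K.pol.Np) (· ∈ Lbar.pol.Np) x.1.1 ∧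
    Sum.elim (· ∈ K.pol.Nm) (· ∈ Lbar.pol.Nm) x.1.2 ∧
    ls x.2 = Sum.map l.toHom.fN _root_.id x.1.1 ∧
    lt x.2 = Sum.map l.toHom.fN _root_.id x.1.2}

/-- The polarized pushback object `D = (K + Lbar) +ₑ Kt`. -/
def polD : PGraph.{u} where
  toGraph :=
  { N := K.toGraph.N ⊕ Lbar.toGraph.N
    E := K.toGraph.E ⊕ Lbar.toGraph.E ⊕ polKt K L Lbar l Lt ls lt
    src := Sum.elim (Sum.inl ∘ K.toGraph.src)
      (Sum.elim (Sum.inr ∘ Lbar.toGraph.src) (fun x => x.1.1.1))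
    tgt := Sum.elim (Sum.inl ∘ K.toGraph.tgt)
      (Sum.elim (Sum.inr ∘ Lbar.toGraph.tgt) (fun x => x.1.1.2)) }
  pol :=
  { Np := fun n => Sum.elim (· ∈ K.pol.Np) (· ∈ Lbar.pol.Np) n
    Nm := fun n => Sum.elim (· ∈ K.pol.Nm) (· ∈ Lbar.pol.Nm) n
    Es := fun e =>
      Sum.elim (· ∈ K.pol.Es) (Sum.elim (· ∈ Lbar.pol.Es) (fun _ => True)) e
    hs := by
      rintro (e | e | e) he
      · exact K.pol.hs e he
      · exact Lbar.pol.hs e he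
      · exact e.2.1
    ht := by
      rintro (e | e | e) he
      · exact K.pol.ht e he
      · exact Lbar.pol.ht e he
      · exact e.2.2.1 }

/-- The canonical inclusion `d : K → D` (a matching). -/
def pold : PGraphHom K (polD K L Lbar l Lt ls lt) where
  toHom := ⟨Sum.inl, Sum.inl, fun _ => rfl, fun _ => rfl⟩
  hNp := fun _ h => h
  hNm := fun _ h => h
  hEs := fun _ h => h

/-- The morphism `l₁ = (l + id) +ₑ l̃ : D → G`, `l̃ (e, n_D, p_D) = e`. -/
def poll1 :
    PGraphHom (polD K L Lbar l Lt ls lt) (polG L Lbar Lt ls lt hls hlt) where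
  toHom :=
  { fN := Sum.map l.toHom.fN _root_.id
    fE := Sum.map l.toHom.fE (Sum.map _root_.id (fun x => x.1.2))
    hsrc := by
      rintro (e | e | e) <;>
        simp [polD, polG, sumGraph, l.toHom.hsrc]
      exact e.2.2.2.1
    htgt := by
      rintro (e | e | e) <;>
        simp [polD, polG, sumGraph, l.toHom.htgt]
      exact e.2.2.2.2 }
  hNp := by
    rintro (n | n) hn
    · exact l.hNp n hn
    · exact hn
  hNm := by
    rintro (n | n) hn
    · exact l.hNm n hn
    · exact hn
  hEs := by
    rintro (e | e | e) he
    · exact l.hEs e he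
    · exact he
    · trivial

end

/-- `(l, d)` is the pullback of `(m, l₁)` in the category of polarized
graphs, i.e. `(l₁, d)` is a pullback complement of `(m, l)`. -/
def IsPPullbackSquare {K L D G : PGraph.{u}} (l : PGraphHom K L)
    (d : PGraphHom K D) (m : PGraphHom L G) (l₁ : PGraphHom D G) : Prop :=
  m.comp l = l₁.comp d ∧
  ∀ (K' : PGraph.{u}) (l' : PGraphHom K' L) (d' : PGraphHom K' D),
    m.comp l' = l₁.comp d' →
    ∃! κ : PGraphHom K' K, l.comp κ = l' ∧ d.comp κ = d'

/-- All linking edges for `f` are polarized: every edge of the codomain not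
in the image of `f` but with some endpoint in the image of `f` is polarized. -/
def LinkPolarized {X Y : PGraph.{u}} (f : PGraphHom X Y) : Prop :=
  ∀ e : Y.toGraph.E, e ∉ Set.range f.toHom.fE →
    (Y.toGraph.src e ∈ Set.range f.toHom.fN ∨
     Y.toGraph.tgt e ∈ Set.range f.toHom.fN) →
    e ∈ Y.pol.Es

/-- A polarized pullback complement of `(m, l)`: a pullback complement such
that every linking edge for `m` and for `d` is polarized. -/
def IsPolarizedPBC {K L D G : PGraph.{u}} (m : PGraphHom L G)
    (l : PGraphHom K L) (d : PGraphHom K D) (l₁ : PGraphHom D G) : Prop :=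
  IsPPullbackSquare l d m l₁ ∧ LinkPolarized m ∧ LinkPolarized d

theorem Sum.map_eq_inl_iff {α β γ δ : Type*} {f : α → γ} {g : β → δ} {z : α ⊕ β} {c : γ} :
    Sum.map f g z = Sum.inl c ↔ ∃ a, z = Sum.inl a ∧ f a = c := by
  cases z <;> simp

theorem Sum.map_eq_inr_iff {α β γ δ : Type*} {f : α → γ} {g : β → δ} {z : α ⊕ β} {c : δ} :
    Sum.map f g z = Sum.inr c ↔ ∃ b, z = Sum.inr b ∧ g b = c := by
  cases z <;> simp

namespace PGraphHom

variable {X Y Z W : PGraph.{u}}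

theorem ext {f g : PGraphHom X Y} (hN : f.toHom.fN = g.toHom.fN)
    (hE : f.toHom.fE = g.toHom.fE) : f = g := by
  obtain ⟨⟨⟩⟩ := f
  obtain ⟨⟨⟩⟩ := g
  cases hN
  cases hE
  rfl

theorem congr_fN {f g : PGraphHom X Y} (h : f = g) (n : X.toGraph.N) :
    f.toHom.fN n = g.toHom.fN n :=
  h ▸ rfl

theorem congr_fE {f g : PGraphHom X Y} (h : f = g) (e : X.toGraph.E) :
    f.toHom.fE e = g.toHom.fE e :=
  h ▸ rfl

@[simp]
theorem comp_fN (g : PGraphHom Y Z) (f : PGraphHom X Y) (n : X.toGraph.N) :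
    (g.comp f).toHom.fN n = g.toHom.fN (f.toHom.fN n) :=
  rfl

@[simp]
theorem comp_fE (g : PGraphHom Y Z) (f : PGraphHom X Y) (e : X.toGraph.E) :
    (g.comp f).toHom.fE e = g.toHom.fE (f.toHom.fE e) :=
  rfl

theorem comp_assoc (h : PGraphHom Z W) (g : PGraphHom Y Z) (f : PGraphHom X Y) :
    (h.comp g).comp f = h.comp (g.comp f) :=
  rfl

theorem cancel_left {f : PGraphHom Y Z} (hN : Function.Injective f.toHom.fN)
    (hE : Function.Injective f.toHom.fE) {g g' : PGraphHom X Y}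
    (h : f.comp g = f.comp g') : g = g' :=
  ext (funext fun n => hN (congr_fN h n)) (funext fun e => hE (congr_fE h e))

structure IsMatching (f : PGraphHom X Y) : Prop where
  injective_fN : Function.Injective f.toHom.fN
  injective_fE : Function.Injective f.toHom.fE
  reflects_Np : ∀ n, f.toHom.fN n ∈ Y.pol.Np → n ∈ X.pol.Np
  reflects_Nm : ∀ n, f.toHom.fN n ∈ Y.pol.Nm → n ∈ X.pol.Nm
  reflects_Es : ∀ e, f.toHom.fE e ∈ Y.pol.Es → e ∈ X.pol.Es

theorem IsMatching.exists_comp_eq {f : PGraphHom Y Z} (hf : f.IsMatching) (g : PGraphHom X Z)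
    (hN : ∀ n, g.toHom.fN n ∈ Set.range f.toHom.fN)
    (hE : ∀ e, g.toHom.fE e ∈ Set.range f.toHom.fE) :
    ∃ κ : PGraphHom X Y, f.comp κ = g := by
  choose κN hκN using hN
  choose κE hκE using hE
  have hsrc : ∀ e, Y.toGraph.src (κE e) = κN (X.toGraph.src e) := fun e =>
    hf.injective_fN <| by rw [← f.toHom.hsrc, hκE, hκN, g.toHom.hsrc]
  have htgt : ∀ e, Y.toGraph.tgt (κE e) = κN (X.toGraph.tgt e) := fun e =>
    hf.injective_fN <| by rw [← f.toHom.htgt, hκE, hκN, g.toHom.htgt]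
  refine ⟨⟨⟨κN, κE, hsrc, htgt⟩, fun n hn => hf.reflects_Np _ ?_, fun n hn => hf.reflects_Nm _ ?_,
    fun e he => hf.reflects_Es _ ?_⟩, ext (funext hκN) (funext hκE)⟩
  · exact (hκN n).symm ▸ g.hNp n hn
  · exact (hκN n).symm ▸ g.hNm n hn
  · exact (hκE e).symm ▸ g.hEs e he

end PGraphHom

def PGraph.point (P M : Prop) : PGraph.{u} where
  toGraph := ⟨PUnit, PEmpty, PEmpty.elim, PEmpty.elim⟩
  pol := ⟨{_n | P}, {_n | M}, ∅, fun e _ => e.elim, fun e _ => e.elim⟩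

def PGraph.arrow (P : Prop) : PGraph.{u} where
  toGraph := ⟨ULift Bool, PUnit, fun _ => ⟨false⟩, fun _ => ⟨true⟩⟩
  pol := ⟨{n | P ∧ n.down = false}, {n | P ∧ n.down = true}, {_e | P},
    fun _ h => ⟨h, rfl⟩, fun _ h => ⟨h, rfl⟩⟩

namespace PGraphHom

variable {X Y : PGraph.{u}} {P M : Prop}

def ofNode (n : X.toGraph.N) (hP : P → n ∈ X.pol.Np) (hM : M → n ∈ X.pol.Nm) :
    PGraphHom (PGraph.point P M) X :=
  ⟨⟨fun _ => n, PEmpty.elim, fun e => e.elim, fun e => e.elim⟩,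
    fun _ h => hP h, fun _ h => hM h, fun e _ => e.elim⟩

def ofEdge (e : X.toGraph.E) (hP : P → e ∈ X.pol.Es) : PGraphHom (PGraph.arrow P) X where
  toHom :=
  { fN := fun b => if b.down then X.toGraph.tgt e else X.toGraph.src e
    fE := fun _ => e
    hsrc := fun _ => rfl
    htgt := fun _ => rfl }
  hNp := fun n h => by
    simpa [h.2] using X.pol.hs e (hP h.1)
  hNm := fun n h => by
    simpa [h.2] using X.pol.ht e (hP h.1)
  hEs := fun _ h => hP h

theorem ofNode_congr {n n' : X.toGraph.N} (h : n = n') {hP : P → n ∈ X.pol.Np}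
    {hM : M → n ∈ X.pol.Nm} {hP' : P → n' ∈ X.pol.Np} {hM' : M → n' ∈ X.pol.Nm} :
    ofNode n hP hM = ofNode n' hP' hM' := by
  subst h
  rfl

theorem ofEdge_congr {e e' : X.toGraph.E} (h : e = e') {hP : P → e ∈ X.pol.Es}
    {hP' : P → e' ∈ X.pol.Es} : ofEdge e hP = ofEdge e' hP' := by
  subst h
  rfl

theorem comp_ofNode (f : PGraphHom X Y) (n : X.toGraph.N) (hP : P → n ∈ X.pol.Np)
    (hM : M → n ∈ X.pol.Nm) :
    f.comp (ofNode n hP hM) =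
      ofNode (f.toHom.fN n) (fun h => f.hNp n (hP h)) (fun h => f.hNm n (hM h)) :=
  ext rfl (funext fun e => e.elim)

theorem comp_ofEdge (f : PGraphHom X Y) (e : X.toGraph.E) (hP : P → e ∈ X.pol.Es) :
    f.comp (ofEdge e hP) = ofEdge (f.toHom.fE e) (fun h => f.hEs e (hP h)) := by
  refine ext (funext fun ⟨b⟩ => ?_) rfl
  cases b
  · exact (f.toHom.hsrc e).symm
  · exact (f.toHom.htgt e).symm

end PGraphHom

namespace IsPPullbackSquare

open PGraphHom

variable {K L D G : PGraph.{u}} {l : PGraphHom K L} {d : PGraphHom K D} {m : PGraphHom L G}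
  {l₁ : PGraphHom D G}

theorem hom_ext (H : IsPPullbackSquare l d m l₁) {K' : PGraph.{u}} {κ κ' : PGraphHom K' K}
    (hl : l.comp κ = l.comp κ') (hd : d.comp κ = d.comp κ') : κ = κ' :=
  (H.2 K' (l.comp κ) (d.comp κ) (by rw [← comp_assoc, H.1, comp_assoc])).unique
    ⟨rfl, rfl⟩ ⟨hl.symm, hd.symm⟩

theorem exists_node (H : IsPPullbackSquare l d m l₁) {a : L.toGraph.N} {x : D.toGraph.N}
    (h : m.toHom.fN a = l₁.toHom.fN x) :
    ∃ k, l.toHom.fN k = a ∧ d.toHom.fN k = x ∧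
      (a ∈ L.pol.Np → x ∈ D.pol.Np → k ∈ K.pol.Np) ∧
      (a ∈ L.pol.Nm → x ∈ D.pol.Nm → k ∈ K.pol.Nm) := by
  obtain ⟨κ, ⟨hl, hd⟩, -⟩ := H.2 (PGraph.point (a ∈ L.pol.Np ∧ x ∈ D.pol.Np)
      (a ∈ L.pol.Nm ∧ x ∈ D.pol.Nm)) (ofNode a And.left And.left) (ofNode x And.right And.right)
    (by rw [comp_ofNode, comp_ofNode]; exact ofNode_congr h)
  exact ⟨κ.toHom.fN ⟨⟩, congr_fN hl ⟨⟩, congr_fN hd ⟨⟩, fun ha hx => κ.hNp ⟨⟩ ⟨ha, hx⟩,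
    fun ha hx => κ.hNm ⟨⟩ ⟨ha, hx⟩⟩

theorem exists_edge (H : IsPPullbackSquare l d m l₁) {a : L.toGraph.E} {x : D.toGraph.E}
    (h : m.toHom.fE a = l₁.toHom.fE x) :
    ∃ k, l.toHom.fE k = a ∧ d.toHom.fE k = x ∧
      (a ∈ L.pol.Es → x ∈ D.pol.Es → k ∈ K.pol.Es) := by
  obtain ⟨κ, ⟨hl, hd⟩, -⟩ := H.2 (PGraph.arrow (a ∈ L.pol.Es ∧ x ∈ D.pol.Es))
    (ofEdge a And.left) (ofEdge x And.right)
    (by rw [comp_ofEdge, comp_ofEdge]; exact ofEdge_congr h)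
  exact ⟨κ.toHom.fE ⟨⟩, congr_fE hl ⟨⟩, congr_fE hd ⟨⟩, fun ha hx => κ.hEs ⟨⟩ ⟨ha, hx⟩⟩

theorem injective_fN (H : IsPPullbackSquare l d m l₁) (hm : Function.Injective m.toHom.fN) :
    Function.Injective d.toHom.fN := by
  intro k k' h
  have hl : l.toHom.fN k = l.toHom.fN k' :=
    hm <| by rw [← comp_fN, ← comp_fN, H.1, comp_fN, comp_fN, h]
  have := H.hom_ext (κ := ofNode (P := False) (M := False) k False.elim False.elim)
    (κ' := ofNode k' False.elim False.elim)
    (by rw [comp_ofNode, comp_ofNode]; exact ofNode_congr hl)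
    (by rw [comp_ofNode, comp_ofNode]; exact ofNode_congr h)
  exact congr_fN this ⟨⟩

theorem injective_fE (H : IsPPullbackSquare l d m l₁) (hm : Function.Injective m.toHom.fE) :
    Function.Injective d.toHom.fE := by
  intro e e' h
  have hl : l.toHom.fE e = l.toHom.fE e' :=
    hm <| by rw [← comp_fE, ← comp_fE, H.1, comp_fE, comp_fE, h]
  have := H.hom_ext (κ := ofEdge (P := False) e False.elim) (κ' := ofEdge e' False.elim)
    (by rw [comp_ofEdge, comp_ofEdge]; exact ofEdge_congr hl)
    (by rw [comp_ofEdge, comp_ofEdge]; exact ofEdge_congr h)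
  exact congr_fE this ⟨⟩

end IsPPullbackSquare

section PolarizedPushback

open PGraphHom

variable {K L Lbar : PGraph.{u}} {l : PGraphHom K L} {Lt : Type u}
  {ls lt : Lt → L.toGraph.N ⊕ Lbar.toGraph.N}
  {hls : ∀ e, Sum.elim (· ∈ L.pol.Np) (· ∈ Lbar.pol.Np) (ls e)}
  {hlt : ∀ e, Sum.elim (· ∈ L.pol.Nm) (· ∈ Lbar.pol.Nm) (lt e)}

local notation "𝐆" => polG L Lbar Lt ls lt hls hlt
local notation "𝐦" => polm L Lbar Lt ls lt hls hlt
local notation "𝐃" => polD K L Lbar l Lt ls lt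
local notation "𝐝" => pold K L Lbar l Lt ls lt
local notation "𝐥₁" => poll1 K L Lbar l Lt ls lt hls hlt

theorem isMatching_polm : (𝐦).IsMatching :=
  ⟨Sum.inl_injective, Sum.inl_injective, fun _ h => h, fun _ h => h, fun _ h => h⟩

theorem isMatching_pold : (𝐝).IsMatching :=
  ⟨Sum.inl_injective, Sum.inl_injective, fun _ h => h, fun _ h => h, fun _ h => h⟩

theorem isPPullbackSquare_pold : IsPPullbackSquare l 𝐝 𝐦 𝐥₁ := by
  refine ⟨rfl, fun K' l' d' hc => ?_⟩
  have hN : ∀ n, d'.toHom.fN n ∈ Set.range (𝐝).toHom.fN := fun n => by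
    obtain ⟨k, hk, -⟩ := Sum.map_eq_inl_iff.1 (congr_fN hc n).symm
    exact ⟨k, hk.symm⟩
  have hE : ∀ e, d'.toHom.fE e ∈ Set.range (𝐝).toHom.fE := fun e => by
    obtain ⟨k, hk, -⟩ := Sum.map_eq_inl_iff.1 (congr_fE hc e).symm
    exact ⟨k, hk.symm⟩
  obtain ⟨κ, hκ⟩ := isMatching_pold.exists_comp_eq d' hN hE
  have hl : l.comp κ = l' := by
    have hm : (𝐦).IsMatching := isMatching_polm
    refine cancel_left hm.injective_fN hm.injective_fE ?_
    calc 𝐦.comp (l.comp κ) = 𝐥₁.comp (𝐝.comp κ) := rfl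
      _ = 𝐦.comp l' := by rw [hκ, hc]
  exact ⟨κ, ⟨hl, hκ⟩, fun κ' hκ' => cancel_left isMatching_pold.injective_fN
    isMatching_pold.injective_fE (hκ'.2.trans hκ.symm)⟩

theorem linkPolarized_polm : LinkPolarized 𝐦 := by
  rintro (e | e | e) he hend
  · exact absurd ⟨e, rfl⟩ he
  · obtain ⟨_, h⟩ | ⟨_, h⟩ := hend <;> cases h
  · trivial

theorem linkPolarized_pold : LinkPolarized 𝐝 := by
  rintro (e | e | e) he hend
  · exact absurd ⟨e, rfl⟩ he
  · obtain ⟨_, h⟩ | ⟨_, h⟩ := hend <;> cases h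
  · trivial

variable {D' : PGraph.{u}} {d' : PGraphHom K D'}
  {l₁' : PGraphHom D' (polG L Lbar Lt ls lt hls hlt)}

theorem exists_nodeMap (H : IsPPullbackSquare l d' 𝐦 l₁') :
    ∃ δN : D'.toGraph.N → 𝐃.toGraph.N,
      (∀ x, (𝐥₁).toHom.fN (δN x) = l₁'.toHom.fN x) ∧
      (∀ k, δN (d'.toHom.fN k) = Sum.inl k) ∧
      (∀ x ∈ D'.pol.Np, δN x ∈ 𝐃.pol.Np) ∧ (∀ x ∈ D'.pol.Nm, δN x ∈ 𝐃.pol.Nm) := by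
  have hinj := H.injective_fN (isMatching_polm (hls := hls) (hlt := hlt)).injective_fN
  suffices ∀ x, ∃ y : 𝐃.toGraph.N, (𝐥₁).toHom.fN y = l₁'.toHom.fN x ∧
      (∀ k, d'.toHom.fN k = x → y = Sum.inl k) ∧
      (x ∈ D'.pol.Np → y ∈ 𝐃.pol.Np) ∧ (x ∈ D'.pol.Nm → y ∈ 𝐃.pol.Nm) by
    choose δN hδl hδd hδNp hδNm using this
    exact ⟨δN, hδl, fun k => hδd _ k rfl, hδNp, hδNm⟩
  intro x
  have hNp := l₁'.hNp x
  have hNm := l₁'.hNm x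
  rcases hx : l₁'.toHom.fN x with a | b <;> rw [hx] at hNp hNm
  · obtain ⟨k, rfl, rfl, hkNp, hkNm⟩ := H.exists_node hx.symm
    exact ⟨Sum.inl k, rfl, fun k' hk' => congrArg Sum.inl (hinj hk').symm,
      fun hp => hkNp (hNp hp) hp, fun hm => hkNm (hNm hm) hm⟩
  · refine ⟨Sum.inr b, rfl, fun k hk => ?_, hNp, hNm⟩
    have := (congr_fN H.1 k).trans (congrArg l₁'.toHom.fN hk)
    rw [comp_fN, hx] at this
    cases this

theorem notMem_range_fE_of_eq_inr (H : IsPPullbackSquare l d' 𝐦 l₁') {e : D'.toGraph.E}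
    {w : Lbar.toGraph.E ⊕ Lt} (he : l₁'.toHom.fE e = Sum.inr w) :
    e ∉ Set.range d'.toHom.fE := by
  rintro ⟨eK, rfl⟩
  have := congr_fE H.1 eK
  rw [comp_fE, comp_fE, he] at this
  cases this

variable {δN : D'.toGraph.N → (polD K L Lbar l Lt ls lt).toGraph.N}

theorem src_mem_Np_of_eq_inr_inr (H : IsPPullbackSquare l d' 𝐦 l₁') (hd' : LinkPolarized d')
    (hδl : ∀ x, (𝐥₁).toHom.fN (δN x) = l₁'.toHom.fN x) (hδNp : ∀ x ∈ D'.pol.Np, δN x ∈ 𝐃.pol.Np)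
    {e : D'.toGraph.E} {t : Lt} (he : l₁'.toHom.fE e = Sum.inr (Sum.inr t)) :
    δN (D'.toGraph.src e) ∈ 𝐃.pol.Np := by
  have hs : (𝐥₁).toHom.fN (δN (D'.toGraph.src e)) = ls t := by
    rw [hδl, ← l₁'.toHom.hsrc, he]
    rfl
  rcases hy : δN (D'.toGraph.src e) with k | b
  · obtain ⟨k', -, hk', -⟩ := H.exists_node (a := l.toHom.fN k) (by rw [← hδl, hy]; rfl)
    exact hy ▸ hδNp _ (D'.pol.hs e (hd' e (notMem_range_fE_of_eq_inr H he) (.inl ⟨k', hk'⟩)))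
  · have := hls t
    rw [← hs, hy] at this
    exact this

theorem tgt_mem_Nm_of_eq_inr_inr (H : IsPPullbackSquare l d' 𝐦 l₁') (hd' : LinkPolarized d')
    (hδl : ∀ x, (𝐥₁).toHom.fN (δN x) = l₁'.toHom.fN x) (hδNm : ∀ x ∈ D'.pol.Nm, δN x ∈ 𝐃.pol.Nm)
    {e : D'.toGraph.E} {t : Lt} (he : l₁'.toHom.fE e = Sum.inr (Sum.inr t)) :
    δN (D'.toGraph.tgt e) ∈ 𝐃.pol.Nm := by
  have ht : (𝐥₁).toHom.fN (δN (D'.toGraph.tgt e)) = lt t := by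
    rw [hδl, ← l₁'.toHom.htgt, he]
    rfl
  rcases hy : δN (D'.toGraph.tgt e) with k | b
  · obtain ⟨k', -, hk', -⟩ := H.exists_node (a := l.toHom.fN k) (by rw [← hδl, hy]; rfl)
    exact hy ▸ hδNm _ (D'.pol.ht e (hd' e (notMem_range_fE_of_eq_inr H he) (.inr ⟨k', hk'⟩)))
  · have := hlt t
    rw [← ht, hy] at this
    exact this

theorem exists_edgeImage (H : IsPPullbackSquare l d' 𝐦 l₁') (hd' : LinkPolarized d')
    (hδl : ∀ x, (𝐥₁).toHom.fN (δN x) = l₁'.toHom.fN x)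
    (hδd : ∀ k, δN (d'.toHom.fN k) = Sum.inl k)
    (hδNp : ∀ x ∈ D'.pol.Np, δN x ∈ 𝐃.pol.Np) (hδNm : ∀ x ∈ D'.pol.Nm, δN x ∈ 𝐃.pol.Nm)
    (e : D'.toGraph.E) :
    ∃ y : 𝐃.toGraph.E, (𝐥₁).toHom.fE y = l₁'.toHom.fE e ∧
      𝐃.toGraph.src y = δN (D'.toGraph.src e) ∧ 𝐃.toGraph.tgt y = δN (D'.toGraph.tgt e) ∧
      (e ∈ D'.pol.Es → y ∈ 𝐃.pol.Es) ∧ ∀ eK, d'.toHom.fE eK = e → y = Sum.inl eK := by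
  have hEs := l₁'.hEs e
  rcases he : l₁'.toHom.fE e with a | w <;> rw [he] at hEs
  · obtain ⟨eK, rfl, rfl, hEsK⟩ := H.exists_edge he.symm
    have hinj := H.injective_fE (isMatching_polm (hls := hls) (hlt := hlt)).injective_fE
    refine ⟨Sum.inl eK, rfl, ?_, ?_, fun h => hEsK (hEs h) h,
      fun eK' h => congrArg Sum.inl (hinj h).symm⟩
    · rw [d'.toHom.hsrc, hδd]
      rfl
    · rw [d'.toHom.htgt, hδd]
      rfl
  have hnot : ∀ eK, d'.toHom.fE eK ≠ e := fun eK h => notMem_range_fE_of_eq_inr H he ⟨eK, h⟩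
  have hs : (𝐥₁).toHom.fN (δN (D'.toGraph.src e)) = 𝐆.toGraph.src (Sum.inr w) := by
    rw [hδl, ← l₁'.toHom.hsrc, he]
  have ht : (𝐥₁).toHom.fN (δN (D'.toGraph.tgt e)) = 𝐆.toGraph.tgt (Sum.inr w) := by
    rw [hδl, ← l₁'.toHom.htgt, he]
  rcases w with b | t
  · obtain ⟨_, hys, rfl⟩ := Sum.map_eq_inr_iff.1 hs
    obtain ⟨_, hyt, rfl⟩ := Sum.map_eq_inr_iff.1 ht
    exact ⟨Sum.inr (Sum.inl b), rfl, hys.symm, hyt.symm, hEs, fun eK h => (hnot eK h).elim⟩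
  · refine ⟨Sum.inr (Sum.inr ⟨((δN (D'.toGraph.src e), δN (D'.toGraph.tgt e)), t),
      src_mem_Np_of_eq_inr_inr H hd' hδl hδNp he, tgt_mem_Nm_of_eq_inr_inr H hd' hδl hδNm he,
      hs.symm, ht.symm⟩), rfl, rfl, rfl, fun _ => trivial, fun eK h => (hnot eK h).elim⟩

theorem exists_comparison (H : IsPPullbackSquare l d' 𝐦 l₁') (hd' : LinkPolarized d') :
    ∃ δ : PGraphHom D' 𝐃, δ.comp d' = 𝐝 ∧ (𝐥₁).comp δ = l₁' := by
  obtain ⟨δN, hδl, hδd, hδNp, hδNm⟩ := exists_nodeMap H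
  choose δE hδEl hsrc htgt hEs hδEd using exists_edgeImage H hd' hδl hδd hδNp hδNm
  exact ⟨⟨⟨δN, δE, hsrc, htgt⟩, hδNp, hδNm, hEs⟩,
    ext (funext hδd) (funext fun eK => hδEd _ eK rfl), ext (funext hδl) (funext hδEl)⟩

theorem eq_of_poll1_fE_eq {y y' : 𝐃.toGraph.E} (h : (𝐥₁).toHom.fE y = (𝐥₁).toHom.fE y')
    (hy : ∀ a, (𝐥₁).toHom.fE y ≠ Sum.inl a) (hs : 𝐃.toGraph.src y = 𝐃.toGraph.src y')
    (ht : 𝐃.toGraph.tgt y = 𝐃.toGraph.tgt y') : y = y' := by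
  rcases y with eK | b | ⟨⟨⟨s, t⟩, e⟩, _⟩
  · exact (hy _ rfl).elim
  all_goals rcases y' with eK' | b' | ⟨⟨⟨s', t'⟩, e'⟩, _⟩ <;> cases h
  · rfl
  · cases hs
    cases ht
    rfl

theorem comparison_unique (H : IsPPullbackSquare l d' 𝐦 l₁') {δ δ' : PGraphHom D' 𝐃}
    (hδ : δ.comp d' = 𝐝 ∧ (𝐥₁).comp δ = l₁') (hδ' : δ'.comp d' = 𝐝 ∧ (𝐥₁).comp δ' = l₁') :
    δ = δ' := by
  have hN : δ.toHom.fN = δ'.toHom.fN := funext fun x => by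
    rcases hx : l₁'.toHom.fN x with a | b
    · obtain ⟨k, -, rfl, -⟩ := H.exists_node hx.symm
      exact (congr_fN hδ.1 k).trans (congr_fN hδ'.1 k).symm
    · obtain ⟨_, h, rfl⟩ := Sum.map_eq_inr_iff.1 ((congr_fN hδ.2 x).trans hx)
      obtain ⟨_, h', rfl⟩ := Sum.map_eq_inr_iff.1 ((congr_fN hδ'.2 x).trans hx)
      exact h.trans h'.symm
  refine ext hN (funext fun e => ?_)
  have hl : (𝐥₁).toHom.fE (δ.toHom.fE e) = l₁'.toHom.fE e := congr_fE hδ.2 e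
  have hl' : (𝐥₁).toHom.fE (δ'.toHom.fE e) = l₁'.toHom.fE e := congr_fE hδ'.2 e
  rcases he : l₁'.toHom.fE e with a | w
  · obtain ⟨eK, -, rfl, -⟩ := H.exists_edge he.symm
    exact (congr_fE hδ.1 eK).trans (congr_fE hδ'.1 eK).symm
  · refine eq_of_poll1_fE_eq (hl.trans hl'.symm) (fun a h => ?_) ?_ ?_
    · rw [hl, he] at h
      cases h
    · rw [δ.toHom.hsrc, δ'.toHom.hsrc, hN]
    · rw [δ.toHom.htgt, δ'.toHom.htgt, hN]

end PolarizedPushback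

theorem polarized_pushback (K L Lbar : PGraph.{u}) (l : PGraphHom K L)
    (Lt : Type u) (ls lt : Lt → L.toGraph.N ⊕ Lbar.toGraph.N)
    (hls : ∀ e, Sum.elim (· ∈ L.pol.Np) (· ∈ Lbar.pol.Np) (ls e))
    (hlt : ∀ e, Sum.elim (· ∈ L.pol.Nm) (· ∈ Lbar.pol.Nm) (lt e)) :
    IsPolarizedPBC (polm L Lbar Lt ls lt hls hlt) l
      (pold K L Lbar l Lt ls lt) (poll1 K L Lbar l Lt ls lt hls hlt) ∧
    ∀ (D' : PGraph.{u}) (d' : PGraphHom K D')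
      (l₁' : PGraphHom D' (polG L Lbar Lt ls lt hls hlt)),
      IsPolarizedPBC (polm L Lbar Lt ls lt hls hlt) l d' l₁' →
      ∃! δ : PGraphHom D' (polD K L Lbar l Lt ls lt),
        δ.comp d' = pold K L Lbar l Lt ls lt ∧
        (poll1 K L Lbar l Lt ls lt hls hlt).comp δ = l₁' := by
  refine ⟨⟨isPPullbackSquare_pold, linkPolarized_polm, linkPolarized_pold⟩,
    fun D' d' l₁' ⟨H, _, hd'⟩ => ?_⟩
  obtain ⟨δ, hδ⟩ := exists_comparison H hd'
  exact ⟨δ, hδ, fun δ' hδ' => comparison_unique H hδ' hδ⟩
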